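/- Let k be a field and σ ⊂ ℝ^n a rational polyhedral cone. Set S = σ^∨ ∩ ℤ^n and S⊥ = σ^⊥ ∩ ℤ^n, so S⊥ ⊆ S are submonoids of ℤ^n. Then: (a) there is a (unique) k-algebra homomorphism π : k[S] → k[S⊥] with π(χ^v) = χ^v for v ∈ S⊥ and π(χ^v) = 0 for v ∈ S ∖ S⊥, and a k-algebra homomorphism ι : k[S⊥] → k[S] with ι(χ^v) = χ^v; (b) there exists a k-algebra homomorphism h : k[S] → k[S][t] into the polynomial ring over k[S] such that ev₁ ∘ h = id_{k[S]}, ev₀ ∘ h = ι ∘ π, and π ∘ ev_c ∘ h = π for every c ∈ k, where ev_c : k[S][t] → k[S] denotes evaluation of the variable t at c. (This is the algebraic homotopy between the affine toric chart X_σ and its closed orbit T_σ.) -/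

import Mathlib

open scoped RealInnerProductSpace

noncomputable section

abbrev Euc (n : ℕ) := EuclideanSpace ℝ (Fin n)

/-- A vector of `ℝ^n` has integral coordinates. -/
def IsIntegralVec {n : ℕ} (x : Euc n) : Prop := ∀ i, ∃ m : ℤ, x i = (m : ℝ)

/-- A rational polyhedral cone in `ℝ^n`. -/
def IsRatPolyCone {n : ℕ} (σ : Set (Euc n)) : Prop :=
  ∃ (k : ℕ) (v : Fin k → Euc n), (∀ i, IsIntegralVec (v i)) ∧
    σ = {x | ∃ lam : Fin k → ℝ, (∀ i, 0 ≤ lam i) ∧ x = ∑ i, lam i • v i}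

/-- Strict convexity of a cone: `σ ∩ (−σ) = {0}`. -/
def IsStrictlyConvexCone {n : ℕ} (σ : Set (Euc n)) : Prop := σ ∩ (-σ) = {0}

/-- The dual cone. -/
def dualCone {n : ℕ} (σ : Set (Euc n)) : Set (Euc n) := {u | ∀ x ∈ σ, 0 ≤ ⟪u, x⟫}

/-- The orthogonal of a cone. -/
def orthCone {n : ℕ} (σ : Set (Euc n)) : Set (Euc n) := {u | ∀ x ∈ σ, ⟪u, x⟫ = 0}

/-- `τ` is a face of `σ`. -/
def IsFaceOf {n : ℕ} (τ σ : Set (Euc n)) : Prop :=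
  ∃ u ∈ dualCone σ, τ = σ ∩ {x | ⟪u, x⟫ = 0}

/-- The dimension of a cone: the dimension of its linear span. -/
def coneDim {n : ℕ} (σ : Set (Euc n)) : ℕ := Module.finrank ℝ (Submodule.span ℝ σ)

/-- A fan in `ℝ^n`. -/
structure IsFan {n : ℕ} (Δ : Set (Set (Euc n))) : Prop where
  finite : Δ.Finite
  poly : ∀ σ ∈ Δ, IsRatPolyCone σ
  strictconv : ∀ σ ∈ Δ, IsStrictlyConvexCone σ
  face_mem : ∀ σ ∈ Δ, ∀ τ, IsFaceOf τ σ → τ ∈ Δ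
  inter_face : ∀ σ ∈ Δ, ∀ τ ∈ Δ, IsFaceOf (σ ∩ τ) σ ∧ IsFaceOf (σ ∩ τ) τ

/-- A complete fan: the union of the cones is everything. -/
def IsCompleteFan {n : ℕ} (Δ : Set (Set (Euc n))) : Prop :=
  IsFan Δ ∧ ⋃₀ Δ = Set.univ

/-- The real vector of `ℝ^n` associated to an integer vector of `ℤ^n`. -/
def toRealVec {n : ℕ} (v : Fin n → ℤ) : Euc n := WithLp.toLp 2 (fun i => (v i : ℝ))

lemma toRealVec_zero {n : ℕ} : toRealVec (0 : Fin n → ℤ) = 0 := by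
  ext i; simp [toRealVec]

lemma toRealVec_add {n : ℕ} (v w : Fin n → ℤ) :
    toRealVec (v + w) = toRealVec v + toRealVec w := by
  ext i
  show ((v i + w i : ℤ) : ℝ) = toRealVec v i + toRealVec w i
  push_cast
  rfl

/-- The monoid `S = σ^∨ ∩ ℤ^n` of lattice points of the dual cone. -/
def dualLatticeMonoid {n : ℕ} (σ : Set (Euc n)) : AddSubmonoid (Fin n → ℤ) where
  carrier := {v | toRealVec v ∈ dualCone σ}
  zero_mem' := by
    intro x hx
    rw [toRealVec_zero, inner_zero_left]
  add_mem' := by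
    intro v w hv hw x hx
    rw [toRealVec_add, inner_add_left]
    exact add_nonneg (hv x hx) (hw x hx)

/-- The monoid `S⊥ = σ^⊥ ∩ ℤ^n` of lattice points of the orthogonal of `σ`. -/
def orthLatticeMonoid {n : ℕ} (σ : Set (Euc n)) : AddSubmonoid (Fin n → ℤ) where
  carrier := {v | toRealVec v ∈ orthCone σ}
  zero_mem' := by
    intro x hx
    rw [toRealVec_zero, inner_zero_left]
  add_mem' := by
    intro v w hv hw x hx
    rw [toRealVec_add, inner_add_left, hv x hx, hw x hx, add_zero]

lemma orthLatticeMonoid_le_dualLatticeMonoid {n : ℕ} (σ : Set (Euc n)) :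
    orthLatticeMonoid σ ≤ dualLatticeMonoid σ :=
  fun _ hv x hx => (hv x hx).ge

/-- `π : k[S] → k[S⊥]` is the projection: `π(χ^v) = χ^v` for `v ∈ S⊥` and
`π(χ^v) = 0` for `v ∈ S ∖ S⊥`. -/
def IsOrbitProjection {n : ℕ} (𝕜 : Type*) [Field 𝕜] (σ : Set (Euc n))
    (π : AddMonoidAlgebra 𝕜 ↥(dualLatticeMonoid σ) →ₐ[𝕜]
      AddMonoidAlgebra 𝕜 ↥(orthLatticeMonoid σ)) : Prop :=
  (∀ v : ↥(orthLatticeMonoid σ),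
      π (AddMonoidAlgebra.single
          (AddSubmonoid.inclusion (orthLatticeMonoid_le_dualLatticeMonoid σ) v) 1) =
        AddMonoidAlgebra.single v 1) ∧
  (∀ v : ↥(dualLatticeMonoid σ), (v : Fin n → ℤ) ∉ orthLatticeMonoid σ →
      π (AddMonoidAlgebra.single v 1) = 0)

/-- `ι : k[S⊥] → k[S]` is the inclusion: `ι(χ^v) = χ^v` for `v ∈ S⊥`. -/
def IsOrbitInclusion {n : ℕ} (𝕜 : Type*) [Field 𝕜] (σ : Set (Euc n))
    (ι : AddMonoidAlgebra 𝕜 ↥(orthLatticeMonoid σ) →ₐ[𝕜]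
      AddMonoidAlgebra 𝕜 ↥(dualLatticeMonoid σ)) : Prop :=
  ∀ v : ↥(orthLatticeMonoid σ),
    ι (AddMonoidAlgebra.single v 1) =
      AddMonoidAlgebra.single
        (AddSubmonoid.inclusion (orthLatticeMonoid_le_dualLatticeMonoid σ) v) 1

/-!
`S⊥` is a face of the monoid `S`: if `u, w ∈ S` and `u + w ∈ S⊥`, then `⟪u, x⟫` and `⟪w, x⟫` are
nonnegative with sum zero on `σ`, so `u, w ∈ S⊥`. Hence killing the monomials outside `S⊥` is
multiplicative, which gives `π`, and `ι` is functoriality along `S⊥ ≤ S`.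

For the homotopy, write `σ` as the cone over integral vectors `v₁, …, v_K`. The lattice vector
`w = ∑ vᵢ` gives a degree `d u = ⟪u, w⟫ ∈ ℕ` on `S`, additive and vanishing exactly on `S⊥`, and
`h (χ^u) = χ^u t^(d u)`. At `t = 1` this is the identity, at `t = 0` it keeps exactly the monomials
of `S⊥`, and `π ∘ ev_c ∘ h = π` for every `c` because `d` vanishes on `S⊥`.
-/

open AddMonoidAlgebra Polynomial

section FaceProjection

variable {k G : Type*} [CommSemiring k] [AddCommMonoid G] {S T : AddSubmonoid G}

def AddSubmonoid.IsFaceOf (T S : AddSubmonoid G) : Prop :=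
  ∀ u ∈ S, ∀ w ∈ S, u + w ∈ T → u ∈ T

lemma AddSubmonoid.IsFaceOf.add_mem_iff (hface : T.IsFaceOf S) (u w : S) :
    ((u + w : S) : G) ∈ T ↔ (u : G) ∈ T ∧ (w : G) ∈ T :=
  ⟨fun h => ⟨hface _ u.2 _ w.2 h, hface _ w.2 _ u.2 (add_comm (u : G) w ▸ h)⟩,
    fun h => T.add_mem h.1 h.2⟩

open Classical in
def faceProjectionHom (hface : T.IsFaceOf S) : Multiplicative S →* AddMonoidAlgebra k T where
  toFun u := if h : (u.toAdd : G) ∈ T then single ⟨_, h⟩ 1 else 0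
  map_one' := dif_pos T.zero_mem
  map_mul' a b := by
    simp only [toAdd_mul]
    by_cases hab : (a.toAdd : G) ∈ T ∧ (b.toAdd : G) ∈ T
    · rw [dif_pos ((hface.add_mem_iff _ _).2 hab), dif_pos hab.1, dif_pos hab.2,
        single_mul_single, one_mul]
      rfl
    · rw [dif_neg (mt (hface.add_mem_iff _ _).1 hab)]
      rcases not_and_or.1 hab with ha | hb
      · rw [dif_neg ha, zero_mul]
      · rw [dif_neg hb, mul_zero]

def faceProjection (hface : T.IsFaceOf S) : AddMonoidAlgebra k S →ₐ[k] AddMonoidAlgebra k T :=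
  lift k _ S (faceProjectionHom hface)

lemma faceProjection_single_of_mem (hface : T.IsFaceOf S) {u : S} (hu : (u : G) ∈ T) :
    faceProjection hface (single u (1 : k)) = single ⟨u, hu⟩ 1 := by
  simp [faceProjection, faceProjectionHom, hu]

lemma faceProjection_single_of_notMem (hface : T.IsFaceOf S) {u : S} (hu : (u : G) ∉ T) :
    faceProjection hface (single u (1 : k)) = 0 := by
  simp [faceProjection, faceProjectionHom, hu]

lemma faceProjection_single_inclusion (hface : T.IsFaceOf S) (hTS : T ≤ S) (v : T) :
    faceProjection hface (single (AddSubmonoid.inclusion hTS v) (1 : k)) = single v 1 :=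
  faceProjection_single_of_mem hface v.2

lemma eq_faceProjection (hface : T.IsFaceOf S) (hTS : T ≤ S)
    {π : AddMonoidAlgebra k S →ₐ[k] AddMonoidAlgebra k T}
    (hmem : ∀ v : T, π (single (AddSubmonoid.inclusion hTS v) 1) = single v 1)
    (hnotMem : ∀ u : S, (u : G) ∉ T → π (single u 1) = 0) :
    π = faceProjection hface := by
  refine algHom_ext (fun u => ?_) (Subsingleton.elim _ _)
  by_cases hu : (u : G) ∈ T
  · exact (hmem ⟨u, hu⟩).trans (faceProjection_single_inclusion hface hTS ⟨u, hu⟩).symm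
  · rw [hnotMem u hu, faceProjection_single_of_notMem hface hu]

lemma mapDomainAlgHom_inclusion_single (hTS : T ≤ S) (v : T) :
    mapDomainAlgHom k k (AddSubmonoid.inclusion hTS) (single v 1) =
      single (AddSubmonoid.inclusion hTS v) 1 := by
  simp

lemma eq_mapDomainAlgHom_inclusion (hTS : T ≤ S)
    {ι : AddMonoidAlgebra k T →ₐ[k] AddMonoidAlgebra k S}
    (hι : ∀ v : T, ι (single v 1) = single (AddSubmonoid.inclusion hTS v) 1) :
    ι = mapDomainAlgHom k k (AddSubmonoid.inclusion hTS) :=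
  algHom_ext (fun v => by rw [hι, mapDomainAlgHom_inclusion_single]) (Subsingleton.elim _ _)

end FaceProjection

section DegreeHomotopy

variable {k G : Type*} [CommSemiring k] [AddCommMonoid G] {S T : AddSubmonoid G}

def degreeHomotopy (d : S →+ ℕ) : AddMonoidAlgebra k S →ₐ[k] (AddMonoidAlgebra k S)[X] :=
  lift k _ S ((C : AddMonoidAlgebra k S →+* _).toMonoidHom.comp (of k S) *
    (powersHom _ X).comp d.toMultiplicative)

lemma eval_degreeHomotopy_single (d : S →+ ℕ) (c : AddMonoidAlgebra k S) (u : S) :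
    eval c (degreeHomotopy d (single u (1 : k))) = single u 1 * c ^ d u := by
  simp [degreeHomotopy]

lemma eval_one_degreeHomotopy (d : S →+ ℕ) (a : AddMonoidAlgebra k S) :
    eval 1 (degreeHomotopy d a) = a := by
  have h : ((aeval 1).restrictScalars k).comp (degreeHomotopy d) = AlgHom.id k _ :=
    algHom_ext (fun u => by simp [eval_degreeHomotopy_single]) (Subsingleton.elim _ _)
  simpa using DFunLike.congr_fun h a

lemma eval_zero_degreeHomotopy (hface : T.IsFaceOf S) (hTS : T ≤ S) (d : S →+ ℕ)
    (hd : ∀ u : S, d u = 0 ↔ (u : G) ∈ T) (a : AddMonoidAlgebra k S) :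
    eval 0 (degreeHomotopy d a) =
      mapDomainAlgHom k k (AddSubmonoid.inclusion hTS) (faceProjection hface a) := by
  have h : ((aeval 0).restrictScalars k).comp (degreeHomotopy d) =
      (mapDomainAlgHom k k (AddSubmonoid.inclusion hTS)).comp (faceProjection hface) := by
    refine algHom_ext (fun u => ?_) (Subsingleton.elim _ _)
    by_cases hu : (u : G) ∈ T
    · simp only [AlgHom.comp_apply, AlgHom.coe_restrictScalars', coe_aeval_eq_eval,
        eval_degreeHomotopy_single, (hd u).2 hu, pow_zero, mul_one,
        faceProjection_single_of_mem hface hu, mapDomainAlgHom_inclusion_single]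
      rfl
    · simp [eval_degreeHomotopy_single, faceProjection_single_of_notMem hface hu,
        zero_pow (mt (hd u).1 hu)]
  simpa using DFunLike.congr_fun h a

lemma faceProjection_eval_degreeHomotopy (hface : T.IsFaceOf S) (d : S →+ ℕ)
    (hd : ∀ u : S, (u : G) ∈ T → d u = 0) (c : AddMonoidAlgebra k S)
    (a : AddMonoidAlgebra k S) :
    faceProjection hface (eval c (degreeHomotopy d a)) = faceProjection hface a := by
  have h : (faceProjection hface).comp (((aeval c).restrictScalars k).comp (degreeHomotopy d)) =
      faceProjection hface := by
    refine algHom_ext (fun u => ?_) (Subsingleton.elim _ _)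
    by_cases hu : (u : G) ∈ T
    · simp [eval_degreeHomotopy_single, hd u hu]
    · simp [eval_degreeHomotopy_single, faceProjection_single_of_notMem hface hu]
  simpa using DFunLike.congr_fun h a

lemma exists_degree_of_int (f : G →+ ℤ) (hf : ∀ u ∈ S, 0 ≤ f u) (hT : ∀ u ∈ S, f u = 0 ↔ u ∈ T) :
    ∃ d : S →+ ℕ, ∀ u : S, d u = 0 ↔ (u : G) ∈ T :=
  ⟨{ toFun u := (f u).toNat
     map_zero' := by simp
     map_add' u w := by simp [Int.toNat_add (hf _ u.2) (hf _ w.2)] },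
   fun u => by
     rw [AddMonoidHom.coe_mk, ZeroHom.coe_mk, Int.toNat_eq_zero, ← hT u u.2]
     exact ⟨fun h => le_antisymm h (hf u u.2), le_of_eq⟩⟩

end DegreeHomotopy

section ToricMonoids

variable {n : ℕ}

lemma dualLatticeMonoid_isFaceOf (σ : Set (Euc n)) :
    (orthLatticeMonoid σ).IsFaceOf (dualLatticeMonoid σ) := by
  intro u hu w hw huw x hx
  have := huw x hx
  rw [toRealVec_add, inner_add_left] at this
  linarith [hu x hx, hw x hx]

def conicalHull {K : ℕ} (v : Fin K → Euc n) : Set (Euc n) :=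
  {x | ∃ lam : Fin K → ℝ, (∀ i, 0 ≤ lam i) ∧ x = ∑ i, lam i • v i}

lemma mem_conicalHull_self {K : ℕ} (v : Fin K → Euc n) (i : Fin K) : v i ∈ conicalHull v :=
  have : (0 : Fin K → ℝ) ≤ Pi.single i 1 := Pi.single_nonneg.2 zero_le_one
  ⟨Pi.single i 1, this, by simp [Pi.single_apply]⟩

lemma inner_sum_eq_zero_iff_mem_orthCone {K : ℕ} (v : Fin K → Euc n) {u : Euc n}
    (hu : u ∈ dualCone (conicalHull v)) :
    ⟪u, ∑ i, v i⟫ = 0 ↔ u ∈ orthCone (conicalHull v) := by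
  have hnonneg : ∀ i ∈ Finset.univ, 0 ≤ ⟪u, v i⟫ := fun i _ => hu _ (mem_conicalHull_self v i)
  rw [inner_sum, Finset.sum_eq_zero_iff_of_nonneg hnonneg]
  constructor
  · rintro hzero _ ⟨lam, -, rfl⟩
    simp [inner_sum, real_inner_smul_right, hzero]
  · exact fun horth i _ => horth _ (mem_conicalHull_self v i)

lemma sum_mem_conicalHull {K : ℕ} (v : Fin K → Euc n) : ∑ i, v i ∈ conicalHull v :=
  ⟨fun _ => 1, fun _ => zero_le_one, by simp only [one_smul]⟩

lemma inner_toRealVec (u m : Fin n → ℤ) :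
    ⟪toRealVec u, toRealVec m⟫ = ((u ⬝ᵥ m : ℤ) : ℝ) := by
  simp [toRealVec, dotProduct, PiLp.inner_apply, mul_comm]

lemma IsIntegralVec.exists_eq_toRealVec {x : Euc n} (hx : IsIntegralVec x) :
    ∃ m, toRealVec m = x := by
  choose m hm using hx
  exact ⟨m, by ext i; simp [toRealVec, hm]⟩

lemma toRealVec_sum {K : ℕ} (m : Fin K → Fin n → ℤ) :
    toRealVec (∑ i, m i) = ∑ i, toRealVec (m i) := by
  ext j; simp [toRealVec]

lemma exists_degree_dualLatticeMonoid {σ : Set (Euc n)} (hσ : IsRatPolyCone σ) :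
    ∃ d : dualLatticeMonoid σ →+ ℕ,
      ∀ u, d u = 0 ↔ (u : Fin n → ℤ) ∈ orthLatticeMonoid σ := by
  obtain ⟨K, v, hint, rfl⟩ := hσ
  choose m hm using fun i => (hint i).exists_eq_toRealVec
  have hsum : toRealVec (∑ i, m i) = ∑ i, v i := by simp [toRealVec_sum, hm]
  have hinner (u : Fin n → ℤ) : ⟪toRealVec u, ∑ i, v i⟫ = ((u ⬝ᵥ ∑ i, m i : ℤ) : ℝ) := by
    rw [← hsum, inner_toRealVec]
  refine exists_degree_of_int (AddMonoidHom.mk' (· ⬝ᵥ ∑ i, m i) fun a b => add_dotProduct a b _)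
    (fun u hu => ?_) (fun u hu => ?_)
  · have := hu _ (sum_mem_conicalHull v)
    rw [hinner] at this
    exact_mod_cast this
  · have := inner_sum_eq_zero_iff_mem_orthCone v hu
    rw [hinner] at this
    exact_mod_cast this

end ToricMonoids

/-- For a rational polyhedral cone `σ ⊆ ℝ^n` and a field
`k`, with `S = σ^∨ ∩ ℤ^n ⊇ S⊥ = σ^⊥ ∩ ℤ^n`: (a) there is a unique
`k`-algebra homomorphism `π : k[S] → k[S⊥]` with `π(χ^v) = χ^v` for
`v ∈ S⊥` and `π(χ^v) = 0` for `v ∈ S ∖ S⊥`, and a `k`-algebra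
homomorphism `ι : k[S⊥] → k[S]` with `ι(χ^v) = χ^v`; (b) there is a
`k`-algebra homomorphism `h : k[S] → k[S][t]` with `ev₁ ∘ h = id`,
`ev₀ ∘ h = ι ∘ π` and `π ∘ ev_c ∘ h = π` for every `c ∈ k`.  (The algebraic
homotopy between the affine toric chart `X_σ` and its closed orbit
`T_σ`.) -/
theorem affine_chart_algebraic_homotopy {n : ℕ} (𝕜 : Type*) [Field 𝕜]
    (σ : Set (Euc n)) (hσ : IsRatPolyCone σ) :
    (∃ π, IsOrbitProjection 𝕜 σ π) ∧
    (∀ π π', IsOrbitProjection 𝕜 σ π → IsOrbitProjection 𝕜 σ π' → π = π') ∧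
    (∃ ι, IsOrbitInclusion 𝕜 σ ι) ∧
    (∀ π ι, IsOrbitProjection 𝕜 σ π → IsOrbitInclusion 𝕜 σ ι →
      ∃ h : AddMonoidAlgebra 𝕜 ↥(dualLatticeMonoid σ) →ₐ[𝕜]
          Polynomial (AddMonoidAlgebra 𝕜 ↥(dualLatticeMonoid σ)),
        (∀ a, Polynomial.eval 1 (h a) = a) ∧
        (∀ a, Polynomial.eval 0 (h a) = ι (π a)) ∧
        (∀ c : 𝕜, ∀ a,
          π (Polynomial.eval
            (algebraMap 𝕜 (AddMonoidAlgebra 𝕜 ↥(dualLatticeMonoid σ)) c) (h a)) = π a)) := by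
  have hface := dualLatticeMonoid_isFaceOf σ
  have hTS := orthLatticeMonoid_le_dualLatticeMonoid σ
  have eq_proj (π) (hπ : IsOrbitProjection 𝕜 σ π) : π = faceProjection hface :=
    eq_faceProjection hface hTS hπ.1 hπ.2
  refine ⟨⟨faceProjection hface, faceProjection_single_inclusion hface hTS,
      fun _ => faceProjection_single_of_notMem hface⟩,
    fun π π' hπ hπ' => (eq_proj π hπ).trans (eq_proj π' hπ').symm,
    ⟨_, mapDomainAlgHom_inclusion_single hTS⟩, ?_⟩
  rintro π ι hπ hι
  obtain rfl := eq_proj π hπ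
  obtain rfl := eq_mapDomainAlgHom_inclusion hTS hι
  obtain ⟨d, hd⟩ := exists_degree_dualLatticeMonoid hσ
  exact ⟨degreeHomotopy d, eval_one_degreeHomotopy d, eval_zero_degreeHomotopy hface hTS d hd,
    fun c => faceProjection_eval_degreeHomotopy hface d (fun u => (hd u).2) _⟩
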